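/- Let d ≥ 1 and let μ be the Haar probability measure on the compact topological group U(d) of unitary d×d complex matrices. Then for every matrix ρ ∈ M_d(ℂ), the Bochner integral ∫_{U(d)} U ρ U† dμ(U) equals (trace(ρ)/d) • 1_d. -/

import Mathlib

open MeasureTheory Matrix

attribute [local instance] Matrix.normedAddCommGroup Matrix.normedSpace

noncomputable instance (d : ℕ) : MeasurableSpace (Matrix.unitaryGroup (Fin d) ℂ) := borel _
instance (d : ℕ) : BorelSpace (Matrix.unitaryGroup (Fin d) ℂ) := ⟨rfl⟩

/-!
Left invariance of the Haar measure makes the twirl `M = ∫ U ρ U† dμ` commute with every unitary.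
Every matrix is a linear combination of unitaries (as in any unital C⋆-algebra), so `M` is
central, hence a scalar matrix; conjugation preserves the trace and `μ` is a probability measure,
so `tr M = tr ρ` fixes the scalar to be `tr ρ / d`.
-/

namespace Matrix

variable {n : Type*} [Fintype n] [DecidableEq n]

-- `R` is given so that `isClosed_unitary` is elaborated for the product topology, which is
-- definitionally, but not syntactically, the topology of the local sup norm.
instance {𝕜 : Type*} [RCLike 𝕜] : CompactSpace (unitaryGroup n 𝕜) :=
  isCompact_iff_compactSpace.mp <|
    Metric.isCompact_of_isClosed_isBounded (isClosed_unitary (R := Matrix n n 𝕜))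
      (isBounded_iff_forall_norm_le.mpr ⟨1, fun _ hU => entrywise_sup_norm_bound_of_unitary hU⟩)

lemma span_unitaryGroup : Submodule.span ℂ (unitaryGroup n ℂ : Set (Matrix n n ℂ)) = ⊤ :=
  @CStarAlgebra.span_unitary _ instCStarAlgebra

lemma mem_range_scalar_of_commute_unitaryGroup {M : Matrix n n ℂ}
    (hM : ∀ U ∈ unitaryGroup n ℂ, Commute U M) : M ∈ Set.range (scalar n) := by
  have hspan : ∀ A ∈ Submodule.span ℂ (unitaryGroup n ℂ : Set (Matrix n n ℂ)), Commute A M := by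
    intro A hA
    induction hA using Submodule.span_induction with
    | mem U hU => exact hM U hU
    | zero => exact Commute.zero_left M
    | add A B _ _ hA hB => exact hA.add_left hB
    | smul c A _ hA => exact hA.smul_left c
  exact mem_range_scalar_iff_commute_single'.mpr fun i j =>
    hspan _ (span_unitaryGroup (n := n) ▸ Submodule.mem_top)

lemma trace_div_card_smul_one_of_mem_range_scalar {R : Type*} [Field R] [CharZero R]
    {M : Matrix n n R} (hM : M ∈ Set.range (scalar n)) :
    (M.trace / Fintype.card n) • (1 : Matrix n n R) = M := by
  obtain ⟨c, rfl⟩ := hM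
  cases isEmpty_or_nonempty n
  · exact Subsingleton.elim _ _
  · have hcard : (Fintype.card n : R) ≠ 0 := Nat.cast_ne_zero.mpr Fintype.card_ne_zero
    rw [scalar_apply, trace_diagonal, Finset.sum_const, Finset.card_univ, nsmul_eq_mul,
      mul_div_cancel_left₀ c hcard, smul_one_eq_diagonal]

section Twirl

variable [MeasurableSpace (unitaryGroup n ℂ)] (μ : Measure (unitaryGroup n ℂ)) (ρ : Matrix n n ℂ)

noncomputable def unitaryTwirl : Matrix n n ℂ :=
  ∫ U : unitaryGroup n ℂ, (U : Matrix n n ℂ) * ρ * star (U : Matrix n n ℂ) ∂μ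

variable [BorelSpace (unitaryGroup n ℂ)]

lemma commute_unitaryTwirl [μ.IsMulLeftInvariant] (V : unitaryGroup n ℂ) :
    Commute (V : Matrix n n ℂ) (unitaryTwirl μ ρ) := by
  refine (commute_unitary_iff_star_right_conjugate V.2).mpr ?_
  let conjV : Matrix n n ℂ ≃L[ℂ] Matrix n n ℂ :=
    (Unitary.conjStarAlgAut ℂ _ V).toAlgEquiv.toLinearEquiv.toContinuousLinearEquiv
  calc (V : Matrix n n ℂ) * unitaryTwirl μ ρ * star (V : Matrix n n ℂ)
      = conjV (unitaryTwirl μ ρ) := rfl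
    _ = ∫ U : unitaryGroup n ℂ, conjV ((U : Matrix n n ℂ) * ρ * star (U : Matrix n n ℂ)) ∂μ :=
      (conjV.integral_comp_comm _).symm
    _ = ∫ U : unitaryGroup n ℂ, ((V * U : unitaryGroup n ℂ) : Matrix n n ℂ) * ρ *
          star ((V * U : unitaryGroup n ℂ) : Matrix n n ℂ) ∂μ := by
      simp [conjV, mul_assoc]
    _ = unitaryTwirl μ ρ :=
      integral_mul_left_eq_self
        (fun U : unitaryGroup n ℂ => (U : Matrix n n ℂ) * ρ * star (U : Matrix n n ℂ)) V

lemma trace_unitaryTwirl [IsProbabilityMeasure μ] : (unitaryTwirl μ ρ).trace = ρ.trace := by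
  have hcont : Continuous fun U : unitaryGroup n ℂ =>
      (U : Matrix n n ℂ) * ρ * star (U : Matrix n n ℂ) := by
    fun_prop
  let traceL : Matrix n n ℂ →L[ℂ] ℂ := (traceLinearMap n ℂ ℂ).toContinuousLinearMap
  have hint := hcont.integrable_of_hasCompactSupport (μ := μ) (.of_compactSpace _)
  calc (unitaryTwirl μ ρ).trace
      = ∫ U : unitaryGroup n ℂ, traceL ((U : Matrix n n ℂ) * ρ * star (U : Matrix n n ℂ)) ∂μ :=
        (traceL.integral_comp_comm hint).symm
    _ = ∫ _ : unitaryGroup n ℂ, ρ.trace ∂μ := by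
      congr 1 with U
      simp [traceL, trace_mul_cycle, mem_unitaryGroup_iff'.mp U.2]
    _ = ρ.trace := by simp

end Twirl

end Matrix

theorem haar_twirl_eq_smul_one (d : ℕ)
    (μ : Measure (Matrix.unitaryGroup (Fin d) ℂ))
    [μ.IsHaarMeasure] [IsProbabilityMeasure μ]
    (ρ : Matrix (Fin d) (Fin d) ℂ) :
    (∫ U : Matrix.unitaryGroup (Fin d) ℂ,
        (U : Matrix (Fin d) (Fin d) ℂ) * ρ * star (U : Matrix (Fin d) (Fin d) ℂ) ∂μ)
      = (ρ.trace / (d : ℂ)) • (1 : Matrix (Fin d) (Fin d) ℂ) := by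
  have hscalar : unitaryTwirl μ ρ ∈ Set.range (scalar (Fin d)) :=
    mem_range_scalar_of_commute_unitaryGroup fun V hV => commute_unitaryTwirl μ ρ ⟨V, hV⟩
  have h := trace_div_card_smul_one_of_mem_range_scalar hscalar
  rw [trace_unitaryTwirl, Fintype.card_fin] at h
  exact h.symm
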